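/- Let (Ω, P) be a finite probability space with an event Γ of probability P(Γ) = 1/4 and a random variable v with values in [0,1] satisfying E[v] ≥ 1 - δ, where δ > 0. For any ε ∈ (0, 1-δ), there exists a signal g (an atom of a finite partition G of Ω) such that E[v | g] > 1 - δ - ε and P(Γ | g) ≥ 1/4 - δ/ε. -/

import Mathlib

open Finset

/-- Lemma "u-g": on a finite probability space with an event Γ of probability 1/4
and a [0,1]-valued payoff v with E[v] ≥ 1-δ, for any ε ∈ (0, 1-δ) there is a
signal g (atom of a finite partition induced by `sig`) with E[v | g] > 1-δ-ε
and P(Γ | g) ≥ 1/4 - δ/ε. -/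
theorem stmt_6 {Ω G : Type*} [Fintype Ω] [Fintype G] [DecidableEq Ω] [DecidableEq G]
    (P : Ω → ℝ) (hP : ∀ ω, 0 ≤ P ω) (hsum : ∑ ω, P ω = 1)
    (v : Ω → ℝ) (hv0 : ∀ ω, 0 ≤ v ω) (hv1 : ∀ ω, v ω ≤ 1)
    (Γ : Finset Ω) (hΓ : ∑ ω ∈ Γ, P ω = 1/4)
    (sig : Ω → G)
    (hpos : ∀ g : G, 0 < ∑ ω ∈ univ.filter (fun ω => sig ω = g), P ω)
    (δ ε : ℝ) (hδ : 0 < δ) (hε : 0 < ε) (hε' : ε < 1 - δ)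
    (hE : ∑ ω, P ω * v ω ≥ 1 - δ) :
    ∃ g : G,
      (∑ ω ∈ univ.filter (fun ω => sig ω = g), P ω * v ω) /
        (∑ ω ∈ univ.filter (fun ω => sig ω = g), P ω) > 1 - δ - ε ∧
      (∑ ω ∈ (univ.filter (fun ω => sig ω = g)) ∩ Γ, P ω) /
        (∑ ω ∈ univ.filter (fun ω => sig ω = g), P ω) ≥ 1/4 - δ/ε := by
  classical
  set S : G → Finset Ω := fun g => univ.filter (fun ω => sig ω = g) with hS
  set p : G → ℝ := fun g => ∑ ω ∈ S g, P ω with hp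
  set w : G → ℝ := fun g => ∑ ω ∈ S g, P ω * v ω with hw
  set r : G → ℝ := fun g => ∑ ω ∈ S g ∩ Γ, P ω with hr
  have hppos : ∀ g, 0 < p g := hpos
  have hsump : ∑ g, p g = 1 := by
    rw [hp]
    simpa using (Finset.sum_fiberwise univ sig P).trans hsum
  have hsumw : ∑ g, w g = ∑ ω, P ω * v ω := by
    rw [hw]
    simpa using Finset.sum_fiberwise univ sig (fun ω => P ω * v ω)
  have hSΓ : ∀ g, S g ∩ Γ = Γ.filter (fun ω => sig ω = g) := by
    intro g
    ext ω
    simp [hS, Finset.mem_filter, Finset.mem_inter, and_comm]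
  have hsumr : ∑ g, r g = 1/4 := by
    rw [hr]
    simp only [hSΓ]
    simpa using (Finset.sum_fiberwise Γ sig P).trans hΓ
  have hwle : ∀ g, w g ≤ p g := fun g =>
    Finset.sum_le_sum (fun ω _ => mul_le_of_le_one_right (hP ω) (hv1 ω))
  have hrle : ∀ g, r g ≤ p g := fun g =>
    Finset.sum_le_sum_of_subset_of_nonneg (Finset.inter_subset_left) (fun ω _ _ => hP ω)
  have hrnn : ∀ g, 0 ≤ r g := fun g => Finset.sum_nonneg (fun ω _ => hP ω)
  have hpnn : ∀ g, 0 ≤ p g := fun g => (hppos g).le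
  -- Bad / Good signals
  set Bad : Finset G := univ.filter (fun g => w g ≤ (1-δ-ε) * p g) with hBad
  set Good : Finset G := univ.filter (fun g => (1-δ-ε) * p g < w g) with hGood
  have hsplit : ∀ f : G → ℝ, ∑ g, f g = ∑ g ∈ Bad, f g + ∑ g ∈ Good, f g := by
    intro f
    have hG' : Good = univ.filter (fun g => ¬ (w g ≤ (1-δ-ε) * p g)) := by
      rw [hGood]; ext g; simp [not_le]
    rw [hBad, hG', Finset.sum_filter_add_sum_filter_not]
  set q : ℝ := ∑ g ∈ Bad, p g with hq
  have hqnn : 0 ≤ q := Finset.sum_nonneg (fun g _ => hpnn g)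
  have hkey : (δ + ε) * q ≤ δ := by
    have h1 : ∑ g ∈ Bad, w g ≤ (1-δ-ε) * q := by
      rw [hq, Finset.mul_sum]
      exact Finset.sum_le_sum (fun g hg => by
        simp only [hBad, Finset.mem_filter] at hg; exact hg.2)
    have h2 : ∑ g ∈ Good, w g ≤ ∑ g ∈ Good, p g :=
      Finset.sum_le_sum (fun g _ => hwle g)
    have h3 : ∑ g ∈ Good, p g = 1 - q := by
      have := hsplit p
      rw [hsump] at this; linarith
    have h4 : (1:ℝ) - δ ≤ ∑ g, w g := by rw [hsumw]; exact hE
    rw [hsplit w] at h4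
    nlinarith
  have hqle : q ≤ δ / ε := by
    rw [le_div_iff₀ hε]
    nlinarith
  have hGoodr : 1/4 - δ/ε ≤ ∑ g ∈ Good, r g := by
    have h1 : ∑ g ∈ Bad, r g ≤ q := Finset.sum_le_sum (fun g _ => hrle g)
    have := hsplit r
    rw [hsumr] at this
    linarith
  -- the target, abstractly
  have main : ∃ g ∈ Good, 1/4 - δ/ε ≤ r g / p g := by
    by_cases hc : 1/4 - δ/ε ≤ 0
    · -- any good g works; Good is nonempty
      have hne : Good.Nonempty := by
        rw [Finset.nonempty_iff_ne_empty]
        intro h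
        have h4 : (1:ℝ) - δ ≤ ∑ g, w g := by rw [hsumw]; exact hE
        rw [hsplit w, h, Finset.sum_empty, add_zero] at h4
        have h1 : ∑ g ∈ Bad, w g ≤ (1-δ-ε) * q := by
          rw [hq, Finset.mul_sum]
          exact Finset.sum_le_sum (fun g hg => by
            simp only [hBad, Finset.mem_filter] at hg; exact hg.2)
        have hq1 : q ≤ 1 := by
          have := hsplit p
          rw [hsump, h, Finset.sum_empty, add_zero] at this
          linarith
        nlinarith
      obtain ⟨g, hg⟩ := hne
      exact ⟨g, hg, le_trans hc (div_nonneg (hrnn g) (hpnn g))⟩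
    · push_neg at hc
      have hGp1 : ∑ g ∈ Good, p g ≤ 1 := by
        have := hsplit p
        rw [hsump] at this; linarith
      have hsl : ∑ g ∈ Good, (1/4 - δ/ε) * p g ≤ ∑ g ∈ Good, r g := by
        rw [← Finset.mul_sum]
        calc (1/4 - δ/ε) * ∑ g ∈ Good, p g ≤ (1/4 - δ/ε) * 1 :=
              mul_le_mul_of_nonneg_left hGp1 hc.le
          _ ≤ ∑ g ∈ Good, r g := by rw [mul_one]; exact hGoodr
      have hne : Good.Nonempty := by
        rw [Finset.nonempty_iff_ne_empty]
        intro h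
        rw [h, Finset.sum_empty] at hGoodr
        linarith
      obtain ⟨g, hg, hle⟩ := Finset.exists_le_of_sum_le hne hsl
      exact ⟨g, hg, by rw [le_div_iff₀ (hppos g)]; linarith⟩
  obtain ⟨g, hg, hgr⟩ := main
  refine ⟨g, ?_, hgr⟩
  simp only [hGood, Finset.mem_filter] at hg
  rw [gt_iff_lt, lt_div_iff₀ (hppos g)]
  linarith [hg.2]
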